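/- arXiv:2604.09926 — 2 statements merged into one kernel-verified Lean document; each statement's English description precedes it below -/
import Mathlib

section
/- Let p, n be positive integers, let λ ∈ ℂ^p, let S : ℂ^p → ℂ^p be the diagonal linear map (Sθ)_i = λ_i θ_i, and let A : ℂ^n → ℂ^n be a linear map. Suppose σ : ℂ^p → ℂ^n is analytic on all of ℂ^p and satisfies σ(Sθ) = A(σ(θ)) for every θ ∈ ℂ^p. Then for every multi-index α ∈ ℕ^p, the mixed partial derivative v_α := ∂^α σ(0) (the iterated directional derivative of σ at 0, taken α_i times along the i-th coordinate direction) satisfies A v_α = λ^α v_α, where λ^α := λ_1^{α_1} ⋯ λ_p^{α_p}. In particular, if v_α ≠ 0 then λ^α is an eigenvalue of A. -/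
/-- Partial derivative of `g` in the `i`-th coordinate direction. -/
noncomputable def coordPartialDeriv {p n : ℕ} (i : Fin p)
    (g : (Fin p → ℂ) → (Fin n → ℂ)) : (Fin p → ℂ) → (Fin n → ℂ) :=
  fun θ => fderiv ℂ g θ (Pi.single i 1)

/-- The mixed partial derivative `∂^α g`, applying the `i`-th coordinate partial
derivative `α i` times for each `i`. -/
noncomputable def mixedPartialDeriv {p n : ℕ} (α : Fin p → ℕ)
    (g : (Fin p → ℂ) → (Fin n → ℂ)) : (Fin p → ℂ) → (Fin n → ℂ) :=
  (List.finRange p).foldr (fun i h => (coordPartialDeriv i)^[α i] h) g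

/-- The diagonal scaling map as a continuous linear map. -/
noncomputable def Smap {p : ℕ} (lam : Fin p → ℂ) : (Fin p → ℂ) →L[ℂ] (Fin p → ℂ) :=
  ContinuousLinearMap.pi (fun i => lam i • ContinuousLinearMap.proj i)

lemma Smap_apply {p : ℕ} (lam : Fin p → ℂ) (θ : Fin p → ℂ) :
    Smap lam θ = fun i => lam i * θ i := rfl

lemma step {p n : ℕ} (lam : Fin p → ℂ) (A : (Fin n → ℂ) →L[ℂ] (Fin n → ℂ))
    (c : ℂ) (g : (Fin p → ℂ) → (Fin n → ℂ)) (hg : AnalyticOnNhd ℂ g Set.univ)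
    (hrel : ∀ θ, c • g (Smap lam θ) = A (g θ)) (i : Fin p) :
    AnalyticOnNhd ℂ (coordPartialDeriv i g) Set.univ ∧
      ∀ θ, (lam i * c) • (coordPartialDeriv i g) (Smap lam θ)
        = A (coordPartialDeriv i g θ) := by
  constructor
  · exact (ContinuousLinearMap.apply ℂ (Fin n → ℂ) (Pi.single i 1)).comp_analyticOnNhd hg.fderiv
  · intro θ
    have hF : HasFDerivAt (fun θ => c • g (Smap lam θ))
        (c • ((fderiv ℂ g (Smap lam θ)).comp (Smap lam))) θ := by
      exact (((hg (Smap lam θ) trivial).differentiableAt.hasFDerivAt).comp θ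
        (Smap lam).hasFDerivAt).const_smul c
    have hG : HasFDerivAt (fun θ => A (g θ)) (A.comp (fderiv ℂ g θ)) θ :=
      A.hasFDerivAt.comp θ (hg θ trivial).differentiableAt.hasFDerivAt
    have heq : (fun θ => c • g (Smap lam θ)) = fun θ => A (g θ) := funext hrel
    rw [heq] at hF
    have := hF.unique hG
    have h2 := congrArg (fun L => L (Pi.single i 1)) this
    simp only [ContinuousLinearMap.smul_apply, ContinuousLinearMap.comp_apply] at h2
    have hs : Smap lam (Pi.single i 1) = lam i • (Pi.single i 1 : Fin p → ℂ) := by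
      funext j
      rw [Smap_apply]
      simp only [Pi.smul_apply, smul_eq_mul]
      by_cases h : j = i
      · subst h; simp
      · simp [Pi.single_eq_of_ne h]
    rw [hs, (fderiv ℂ g (Smap lam θ)).map_smul] at h2
    simp only [coordPartialDeriv, mul_smul, smul_comm (lam i) c]
    rw [h2]

lemma iter_step {p n : ℕ} (lam : Fin p → ℂ) (A : (Fin n → ℂ) →L[ℂ] (Fin n → ℂ))
    (c : ℂ) (g : (Fin p → ℂ) → (Fin n → ℂ)) (hg : AnalyticOnNhd ℂ g Set.univ)
    (hrel : ∀ θ, c • g (Smap lam θ) = A (g θ)) (i : Fin p) (k : ℕ) :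
    AnalyticOnNhd ℂ ((coordPartialDeriv i)^[k] g) Set.univ ∧
      ∀ θ, (lam i ^ k * c) • ((coordPartialDeriv i)^[k] g) (Smap lam θ)
        = A (((coordPartialDeriv i)^[k] g) θ) := by
  induction k with
  | zero => simpa using ⟨hg, hrel⟩
  | succ m ih =>
    have := step lam A (lam i ^ m * c) ((coordPartialDeriv i)^[m] g) ih.1 ih.2 i
    rw [Function.iterate_succ_apply']
    refine ⟨this.1, fun θ => ?_⟩
    have h := this.2 θ
    rw [show lam i * (lam i ^ m * c) = lam i ^ (m + 1) * c by ring] at h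
    exact h

lemma foldr_step {p n : ℕ} (lam : Fin p → ℂ) (A : (Fin n → ℂ) →L[ℂ] (Fin n → ℂ))
    (α : Fin p → ℕ) (g : (Fin p → ℂ) → (Fin n → ℂ)) (hg : AnalyticOnNhd ℂ g Set.univ)
    (hrel : ∀ θ, g (Smap lam θ) = A (g θ)) (l : List (Fin p)) :
    AnalyticOnNhd ℂ (l.foldr (fun i h => (coordPartialDeriv i)^[α i] h) g) Set.univ ∧
      ∀ θ, ((l.map fun i => lam i ^ α i).prod) •
          (l.foldr (fun i h => (coordPartialDeriv i)^[α i] h) g) (Smap lam θ)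
        = A ((l.foldr (fun i h => (coordPartialDeriv i)^[α i] h) g) θ) := by
  induction l with
  | nil => simpa using ⟨hg, hrel⟩
  | cons i t ih =>
    have := iter_step lam A ((t.map fun i => lam i ^ α i).prod)
      (t.foldr (fun i h => (coordPartialDeriv i)^[α i] h) g) ih.1 ih.2 i (α i)
    simpa using this

theorem taylor_coeffs_are_eigenvectors {p n : ℕ} (hp : 0 < p) (hn : 0 < n)
    (lam : Fin p → ℂ)
    (A : (Fin n → ℂ) →ₗ[ℂ] (Fin n → ℂ))
    (σ : (Fin p → ℂ) → (Fin n → ℂ))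
    (hσ : AnalyticOnNhd ℂ σ Set.univ)
    (hkin : ∀ θ : Fin p → ℂ, σ (fun i => lam i * θ i) = A (σ θ))
    (α : Fin p → ℕ) :
    A (mixedPartialDeriv α σ 0) = (∏ i, lam i ^ α i) • mixedPartialDeriv α σ 0 ∧
      (mixedPartialDeriv α σ 0 ≠ 0 →
        Module.End.HasEigenvalue A (∏ i, lam i ^ α i)) := by
  classical
  let A' : (Fin n → ℂ) →L[ℂ] (Fin n → ℂ) := LinearMap.toContinuousLinearMap A
  have hA' : ∀ v, A' v = A v := fun v => rfl
  have hrel : ∀ θ, σ (Smap lam θ) = A' (σ θ) := by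
    intro θ; rw [Smap_apply]; exact hkin θ
  have hmain := foldr_step lam A' α σ hσ hrel (List.finRange p)
  have h0 : Smap lam 0 = 0 := by funext j; rw [Smap_apply]; simp
  have h := hmain.2 0
  rw [h0] at h
  have hprod : ((List.finRange p).map fun i => lam i ^ α i).prod = ∏ i, lam i ^ α i := by
    rw [Fin.prod_univ_def]
  rw [hprod] at h
  have hmix : mixedPartialDeriv α σ 0
      = (List.finRange p).foldr (fun i h => (coordPartialDeriv i)^[α i] h) σ 0 := rfl
  have key : A (mixedPartialDeriv α σ 0) = (∏ i, lam i ^ α i) • mixedPartialDeriv α σ 0 := by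
    rw [hmix, ← hA', ← h]
  refine ⟨key, fun hne => ?_⟩
  exact Module.End.hasEigenvalue_of_hasEigenvector
    ⟨Module.End.mem_eigenspace_iff.mpr key, hne⟩
end

section
/- Let n, m be positive integers and let 𝒜 ∈ ℝ^{n×n}, ℬ ∈ ℝ^{n×m}, 𝒞 ∈ ℝ^{m×n}, 𝒟 ∈ ℝ^{m×m}. Suppose there exists a symmetric positive definite matrix X ∈ ℝ^{n×n} such that the quadratic form Q(x, q) := (𝒜x + ℬq)ᵀ X (𝒜x + ℬq) − xᵀ X x + 2 qᵀ(𝒞x + 𝒟q) is negative definite, i.e., Q(x, q) < 0 for all (x, q) ≠ (0, 0). Then for any sequences x : ℕ → ℝ^n and q : ℕ → ℝ^m satisfying x_{k+1} = 𝒜x_k + ℬq_k for all k, and satisfying the integral quadratic constraint Σ_{k=0}^{T} q_kᵀ(𝒞x_k + 𝒟q_k) ≥ 0 for all T ∈ ℕ, it holds that: (a) x_Tᵀ X x_T ≤ x_0ᵀ X x_0 for all T ∈ ℕ, and (b) x_k → 0 as k → ∞. -/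
/-!
With `V x = xᵀ X x`, the dissipation form is `Q (x, q) = V (𝒜x + ℬq) - V x + 2 qᵀ(𝒞x + 𝒟q)`.
Being negative on the compact unit sphere and 2-homogeneous, `Q` satisfies
`Q p ≤ -ε ‖p‖²` for some `ε > 0`. Along a trajectory this reads
`V x_{k+1} + ε ‖x_k‖² ≤ V x_k - 2 q_kᵀ r_k`; summing and using `Σ q_kᵀ r_k ≥ 0` gives
`V x_T + ε Σ_{k<T} ‖x_k‖² ≤ V x_0`. This is (a), and since `V ≥ 0` the squares `‖x_k‖²` are
summable, so `x_k → 0`.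
-/

open Filter Matrix Finset

lemma exists_pos_mul_norm_sq_le {E : Type*} [NormedAddCommGroup E] [NormedSpace ℝ E]
    [ProperSpace E] {F : E → ℝ} (hF : Continuous F)
    (hsmul : ∀ (c : ℝ) (p : E), F (c • p) = c ^ 2 * F p) (hpos : ∀ p, p ≠ 0 → 0 < F p) :
    ∃ ε > 0, ∀ p, ε * ‖p‖ ^ 2 ≤ F p := by
  obtain ⟨ε, hε, hsphere⟩ := (isCompact_sphere (0 : E) 1).exists_forall_le' hF.continuousOn
    fun p hp => hpos p (ne_zero_of_mem_unit_sphere ⟨p, hp⟩)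
  refine ⟨ε, hε, fun p => ?_⟩
  rcases eq_or_ne p 0 with rfl | hp
  · simpa using (hsmul 0 0).ge
  · have hnorm : ‖p‖ ≠ 0 := norm_ne_zero_iff.mpr hp
    have hunit : ‖p‖⁻¹ • p ∈ Metric.sphere (0 : E) 1 := by
      simp [norm_smul, hnorm]
    calc ε * ‖p‖ ^ 2 ≤ F (‖p‖⁻¹ • p) * ‖p‖ ^ 2 := by gcongr; exact hsphere _ hunit
      _ = F p := by rw [hsmul]; field_simp

lemma add_sum_range_le_of_dissipation {V w s : ℕ → ℝ}
    (hstep : ∀ k, V (k + 1) + w k ≤ V k - s k)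
    (hs : ∀ T, 0 ≤ ∑ k ∈ range (T + 1), s k) (T : ℕ) :
    V T + ∑ k ∈ range T, w k ≤ V 0 := by
  have hsT : 0 ≤ ∑ k ∈ range T, s k := by
    cases T with
    | zero => simp
    | succ T => exact hs T
  have htel : V T - V 0 ≤ ∑ k ∈ range T, (-w k - s k) := by
    rw [← sum_range_sub]
    exact sum_le_sum fun k _ => by linarith [hstep k]
  rw [sum_sub_distrib, sum_neg_distrib] at htel
  linarith

lemma tendsto_zero_of_sum_range_norm_sq_le {E : Type*} [NormedAddCommGroup E] {u : ℕ → E}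
    {c : ℝ} (h : ∀ T, ∑ k ∈ range T, ‖u k‖ ^ 2 ≤ c) : Tendsto u atTop (nhds 0) := by
  have hsq : Tendsto (fun k => ‖u k‖ ^ 2) atTop (nhds 0) :=
    (summable_of_sum_range_le (fun k => sq_nonneg _) h).tendsto_atTop_zero
  have hnorm := hsq.sqrt
  simp only [Real.sqrt_sq (norm_nonneg _), Real.sqrt_zero] at hnorm
  exact tendsto_zero_iff_norm_tendsto_zero.mpr hnorm

section Dissipation

variable {ι κ : Type*} [Fintype ι] [Fintype κ]

def dissipationForm (A : Matrix ι ι ℝ) (B : Matrix ι κ ℝ) (C : Matrix κ ι ℝ)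
    (D : Matrix κ κ ℝ) (X : Matrix ι ι ℝ) (p : (ι → ℝ) × (κ → ℝ)) : ℝ :=
  (A *ᵥ p.1 + B *ᵥ p.2) ⬝ᵥ X *ᵥ (A *ᵥ p.1 + B *ᵥ p.2) - p.1 ⬝ᵥ X *ᵥ p.1
    + 2 * (p.2 ⬝ᵥ (C *ᵥ p.1 + D *ᵥ p.2))

variable (A : Matrix ι ι ℝ) (B : Matrix ι κ ℝ) (C : Matrix κ ι ℝ) (D : Matrix κ κ ℝ)
  (X : Matrix ι ι ℝ)

lemma continuous_dissipationForm : Continuous (dissipationForm A B C D X) := by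
  unfold dissipationForm
  fun_prop

lemma dissipationForm_smul (c : ℝ) (p : (ι → ℝ) × (κ → ℝ)) :
    dissipationForm A B C D X (c • p) = c ^ 2 * dissipationForm A B C D X p := by
  simp only [dissipationForm, Prod.smul_fst, Prod.smul_snd, mulVec_smul, mulVec_add,
    smul_dotProduct, dotProduct_smul, add_dotProduct, dotProduct_add, smul_eq_mul]
  ring

end Dissipation

theorem dissipativity_analysis_general {n m : ℕ}
    (A : Matrix (Fin n) (Fin n) ℝ) (B : Matrix (Fin n) (Fin m) ℝ)
    (C : Matrix (Fin m) (Fin n) ℝ) (D : Matrix (Fin m) (Fin m) ℝ)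
    (X : Matrix (Fin n) (Fin n) ℝ) (hX : X.PosDef)
    (hQ : ∀ (x : Fin n → ℝ) (q : Fin m → ℝ), ¬ (x = 0 ∧ q = 0) →
      (A.mulVec x + B.mulVec q) ⬝ᵥ X.mulVec (A.mulVec x + B.mulVec q)
        - x ⬝ᵥ X.mulVec x
        + 2 * (q ⬝ᵥ (C.mulVec x + D.mulVec q)) < 0)
    (x : ℕ → Fin n → ℝ) (q : ℕ → Fin m → ℝ)
    (hdyn : ∀ k : ℕ, x (k + 1) = A.mulVec (x k) + B.mulVec (q k))
    (hiqc : ∀ T : ℕ, 0 ≤ ∑ k ∈ Finset.range (T + 1),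
      q k ⬝ᵥ (C.mulVec (x k) + D.mulVec (q k))) :
    (∀ T : ℕ, x T ⬝ᵥ X.mulVec (x T) ≤ x 0 ⬝ᵥ X.mulVec (x 0)) ∧
      Tendsto x atTop (nhds 0) := by
  obtain ⟨ε, hε, hQε⟩ := exists_pos_mul_norm_sq_le (F := fun p => -dissipationForm A B C D X p)
    (continuous_dissipationForm A B C D X).neg
    (fun c p => by rw [dissipationForm_smul, mul_neg])
    (fun p hp => neg_pos.mpr (hQ p.1 p.2 fun h => hp (Prod.ext h.1 h.2)))
  set V : ℕ → ℝ := fun k => x k ⬝ᵥ X *ᵥ x k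
  have hstep (k : ℕ) : V (k + 1) + ε * ‖x k‖ ^ 2
      ≤ V k - 2 * (q k ⬝ᵥ (C *ᵥ x k + D *ᵥ q k)) := by
    have hQk : ε * ‖(x k, q k)‖ ^ 2 ≤ -dissipationForm A B C D X (x k, q k) := hQε _
    have hnorm : ε * ‖x k‖ ^ 2 ≤ ε * ‖(x k, q k)‖ ^ 2 := by
      gcongr
      exact norm_fst_le (x k, q k)
    simp only [dissipationForm] at hQk
    simp only [V, hdyn k]
    linarith
  have hdiss := add_sum_range_le_of_dissipation hstep
    fun T => by rw [← mul_sum]; exact mul_nonneg zero_le_two (hiqc T)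
  have hV (k : ℕ) : 0 ≤ V k := hX.posSemidef.dotProduct_mulVec_nonneg (x k)
  have hsum (T : ℕ) : 0 ≤ ∑ k ∈ range T, ε * ‖x k‖ ^ 2 :=
    sum_nonneg fun k _ => by positivity
  refine ⟨fun T => by linarith [hdiss T, hsum T], ?_⟩
  refine tendsto_zero_of_sum_range_norm_sq_le (c := V 0 / ε) fun T => ?_
  rw [le_div_iff₀' hε, mul_sum]
  linarith [hdiss T, hV T]

theorem dissipativity_analysis {n m : ℕ} (hn : 0 < n) (hm : 0 < m)
    (A : Matrix (Fin n) (Fin n) ℝ) (B : Matrix (Fin n) (Fin m) ℝ)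
    (C : Matrix (Fin m) (Fin n) ℝ) (D : Matrix (Fin m) (Fin m) ℝ)
    (X : Matrix (Fin n) (Fin n) ℝ) (hX : X.PosDef)
    (hQ : ∀ (x : Fin n → ℝ) (q : Fin m → ℝ), ¬ (x = 0 ∧ q = 0) →
      (A.mulVec x + B.mulVec q) ⬝ᵥ X.mulVec (A.mulVec x + B.mulVec q)
        - x ⬝ᵥ X.mulVec x
        + 2 * (q ⬝ᵥ (C.mulVec x + D.mulVec q)) < 0)
    (x : ℕ → Fin n → ℝ) (q : ℕ → Fin m → ℝ)
    (hdyn : ∀ k : ℕ, x (k + 1) = A.mulVec (x k) + B.mulVec (q k))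
    (hiqc : ∀ T : ℕ, 0 ≤ ∑ k ∈ Finset.range (T + 1),
      q k ⬝ᵥ (C.mulVec (x k) + D.mulVec (q k))) :
    (∀ T : ℕ, x T ⬝ᵥ X.mulVec (x T) ≤ x 0 ⬝ᵥ X.mulVec (x 0)) ∧
      Tendsto x atTop (nhds 0) :=
  dissipativity_analysis_general A B C D X hX hQ x q hdyn hiqc
end
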